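/- arXiv:1407.5908 — 4 statements merged into one kernel-verified Lean document; each statement's English description precedes it below -/
import Mathlib

section
/- Let X be a bounded real random variable with |E[X]| ≤ C/2 for some C > 0, and let X̃ = clip(X, C) := sign(X)·min(C, |X|). Then |E[X̃] - E[X]| ≤ (2/C)·Var[X]. -/
/-!
Clipping moves `X` only where `|X| > C`, and there by `|X| - C`. Since `|E[X]| ≤ C/2`, pointwise
`|X| - C ≤ |X - E[X]| - C/2 ≤ (2/C)·(X - E[X])²`, the last step being `2t² - Ct + C²/2 > 0`.
Integrating this pointwise bound gives the variance bound.
-/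

open MeasureTheory ProbabilityTheory

theorem Real.sign_mul_min_abs {C : ℝ} (hC : 0 ≤ C) (x : ℝ) :
    Real.sign x * min C |x| = max (-C) (min C x) := by
  rcases lt_trichotomy x 0 with hx | rfl | hx
  · rw [Real.sign_of_neg hx, abs_of_neg hx, neg_one_mul, ← max_neg_neg, neg_neg,
      min_eq_right (hx.le.trans hC)]
  · simp [hC]
  · rw [Real.sign_of_pos hx, abs_of_pos hx, one_mul, max_eq_right (by linarith [le_min hC hx.le])]

theorem abs_max_neg_min_sub_le (C x : ℝ) : |max (-C) (min C x) - x| ≤ max 0 (|x| - C) := by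
  rcases abs_cases x with ⟨_, _⟩ | ⟨_, _⟩ <;>
    rcases max_cases (-C) (min C x) with ⟨_, _⟩ | ⟨_, _⟩ <;>
    rcases min_cases C x with ⟨_, _⟩ | ⟨_, _⟩ <;> rw [abs_le] <;> constructor <;>
    linarith [le_max_left 0 (|x| - C), le_max_right 0 (|x| - C)]

theorem sub_half_le_two_div_mul_sq {C : ℝ} (hC : 0 < C) (t : ℝ) :
    t - C / 2 ≤ 2 / C * t ^ 2 := by
  rw [div_mul_eq_mul_div, le_div_iff₀ hC]
  nlinarith [sq_nonneg (t - C / 4)]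

theorem max_zero_abs_sub_le_two_div_mul_sq {C m : ℝ} (hC : 0 < C) (hm : |m| ≤ C / 2) (x : ℝ) :
    max 0 (|x| - C) ≤ 2 / C * (x - m) ^ 2 := by
  refine max_le (by positivity) ?_
  calc |x| - C ≤ |x - m| - C / 2 := by linarith [abs_sub_abs_le_abs_sub x m]
    _ ≤ 2 / C * |x - m| ^ 2 := sub_half_le_two_div_mul_sq hC _
    _ = 2 / C * (x - m) ^ 2 := by rw [sq_abs]

theorem abs_integral_sub_integral_le_mul_variance {Ω : Type*} [MeasurableSpace Ω]
    {μ : Measure Ω} [IsFiniteMeasure μ] {X Y : Ω → ℝ} {K : ℝ} (hX : MemLp X 2 μ)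
    (hY : Integrable Y μ) (hXY : ∀ ω, |Y ω - X ω| ≤ K * (X ω - μ[X]) ^ 2) :
    |μ[Y] - μ[X]| ≤ K * variance X μ := by
  have hXi : Integrable X μ := hX.integrable one_le_two
  calc |μ[Y] - μ[X]| = |∫ ω, (Y ω - X ω) ∂μ| := by rw [integral_sub hY hXi]
    _ ≤ ∫ ω, |Y ω - X ω| ∂μ := abs_integral_le_integral_abs
    _ ≤ ∫ ω, K * (X ω - μ[X]) ^ 2 ∂μ :=
      integral_mono (hY.sub hXi).abs ((hX.sub (memLp_const _)).integrable_sq.const_mul K) hXY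
    _ = K * variance X μ := by
      rw [integral_const_mul, variance_eq_integral hX.aestronglyMeasurable.aemeasurable]

/-- Clipping bias bound: the expectation of the clipped variable deviates from the
expectation by at most (2/C) times the variance. -/
theorem clip_bias_bound {Ω : Type*} [MeasurableSpace Ω] (μ : Measure Ω)
    [IsProbabilityMeasure μ] (X : Ω → ℝ) (C : ℝ) (hC : 0 < C)
    (hX : MemLp X 2 μ)
    (hmean : |∫ ω, X ω ∂μ| ≤ C / 2) :
    |(∫ ω, Real.sign (X ω) * min C |X ω| ∂μ) - ∫ ω, X ω ∂μ|
      ≤ 2 / C * ProbabilityTheory.variance X μ := by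
  simp_rw [Real.sign_mul_min_abs hC.le]
  have hclip : Integrable (fun ω => max (-C) (min C (X ω))) μ := by
    refine (integrable_const C).mono'
      ((continuous_const.max (continuous_const.min continuous_id)).comp_aestronglyMeasurable
        hX.aestronglyMeasurable) (ae_of_all _ fun ω => ?_)
    exact abs_le.mpr ⟨le_max_left _ _, max_le (by linarith) (min_le_left _ _)⟩
  exact abs_integral_sub_integral_le_mul_variance hX hclip fun ω =>
    (abs_max_neg_min_sub_le C (X ω)).trans (max_zero_abs_sub_le_two_div_mul_sq hC hmean (X ω))
end

section
/- (Key mirror descent inequality) Let W ⊆ ℝ^d be closed convex, f convex and differentiable on W, and x_{t+1} = argmin_{x ∈ W} {⟨g_t, x⟩ + (1/(2η))‖x - x_t‖²} for some η > 0 and vector g_t. Then for any x* ∈ W: ⟨g_t, x_t - x*⟩ ≤ (1/(2η))(‖x_t - x*‖² - ‖x_{t+1} - x*‖²) + (η/2)‖g_t‖². -/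
open scoped InnerProductSpace

/-!
The minimiser `x'` of the prox objective satisfies the first-order condition
`⟪g + (x' - x) / η, y - x'⟫ ≥ 0` for every `y ∈ W`. At `y = x⋆` the three-point identity turns
`⟪x' - x, x⋆ - x'⟫` into a difference of squared distances, and Young's inequality absorbs the
remaining term `⟪g, x - x'⟫`.
-/

section
variable {E : Type*} [NormedAddCommGroup E] [InnerProductSpace ℝ E]

noncomputable def proxObjective (η : ℝ) (g x : E) (y : E) : ℝ :=
  ⟪g, y⟫_ℝ + 1 / (2 * η) * ‖y - x‖ ^ 2

theorem hasFDerivAt_proxObjective (η : ℝ) (g x y : E) :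
    HasFDerivAt (proxObjective η g x) (innerSL ℝ g + η⁻¹ • innerSL ℝ (y - x)) y := by
  refine ((innerSL ℝ g).hasFDerivAt.add
    (((hasFDerivAt_id y).sub_const x).norm_sq.const_mul (1 / (2 * η)))).congr_fderiv ?_
  ext v
  simp only [add_apply, smul_apply, ContinuousLinearMap.comp_apply, ContinuousLinearMap.id_apply,
    coe_innerSL_apply, id_eq, smul_eq_mul, nsmul_eq_mul]
  ring

theorem Convex.inner_prox_step_nonneg {W : Set E} (hW : Convex ℝ W) {η : ℝ} {g x x' y : E}
    (hx' : x' ∈ W) (hmin : IsMinOn (proxObjective η g x) W x') (hy : y ∈ W) :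
    0 ≤ ⟪g, y - x'⟫_ℝ + η⁻¹ * ⟪x' - x, y - x'⟫_ℝ := by
  simpa only [add_apply, smul_apply, coe_innerSL_apply, smul_eq_mul] using
    hmin.localize.hasFDerivWithinAt_nonneg
      (hasFDerivAt_proxObjective η g x x').hasFDerivWithinAt
      (sub_mem_posTangentConeAt_of_segment_subset (hW.segment_subset hx' hy))

theorem real_inner_le_young {η : ℝ} (hη : 0 < η) (u v : E) :
    ⟪u, v⟫_ℝ ≤ η / 2 * ‖u‖ ^ 2 + 1 / (2 * η) * ‖v‖ ^ 2 := by
  have hsq : 0 ≤ 1 / (2 * η) * (η * ‖u‖ - ‖v‖) ^ 2 := by positivity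
  have key : η / 2 * ‖u‖ ^ 2 + 1 / (2 * η) * ‖v‖ ^ 2 - ‖u‖ * ‖v‖
      = 1 / (2 * η) * (η * ‖u‖ - ‖v‖) ^ 2 := by
    field_simp; ring
  linarith [real_inner_le_norm u v]

end

theorem mirror_descent_key_inequality_general {d : ℕ}
    (W : Set (EuclideanSpace ℝ (Fin d))) (hW : Convex ℝ W)
    (η : ℝ) (hη : 0 < η) (g xt xnext : EuclideanSpace ℝ (Fin d))
    (hmem : xnext ∈ W)
    (hmin : ∀ y ∈ W, ⟪g, xnext⟫_ℝ + 1 / (2 * η) * ‖xnext - xt‖ ^ 2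
        ≤ ⟪g, y⟫_ℝ + 1 / (2 * η) * ‖y - xt‖ ^ 2) :
    ∀ xstar ∈ W, ⟪g, xt - xstar⟫_ℝ
      ≤ 1 / (2 * η) * (‖xt - xstar‖ ^ 2 - ‖xnext - xstar‖ ^ 2) + η / 2 * ‖g‖ ^ 2 := by
  intro xstar hxstar
  have hvi := hW.inner_prox_step_nonneg hmem (isMinOn_iff.mpr hmin) hxstar
  have hyoung := real_inner_le_young hη g (xt - xnext)
  have hthree : ‖xstar - xt‖ ^ 2
      = ‖xnext - xt‖ ^ 2 + 2 * ⟪xnext - xt, xstar - xnext⟫_ℝ + ‖xstar - xnext‖ ^ 2 := by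
    rw [← norm_add_sq_real, sub_add_sub_cancel']
  have hsplit : ⟪g, xt - xstar⟫_ℝ = ⟪g, xt - xnext⟫_ℝ - ⟪g, xstar - xnext⟫_ℝ := by
    rw [← inner_sub_right, sub_sub_sub_cancel_right]
  have hη' : η⁻¹ = 2 * (1 / (2 * η)) := by field_simp
  rw [hη'] at hvi
  rw [norm_sub_rev xt xnext] at hyoung
  rw [hsplit, norm_sub_rev xt xstar, norm_sub_rev xnext xstar, hthree]
  linear_combination hyoung + hvi

/-- The key one-step inequality of (stochastic) mirror/gradient descent with Euclidean prox. -/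
theorem mirror_descent_key_inequality {d : ℕ}
    (W : Set (EuclideanSpace ℝ (Fin d))) (hW : Convex ℝ W) (hclosed : IsClosed W)
    (η : ℝ) (hη : 0 < η) (g xt xnext : EuclideanSpace ℝ (Fin d))
    (hxt : xt ∈ W) (hmem : xnext ∈ W)
    (hmin : ∀ y ∈ W, ⟪g, xnext⟫_ℝ + 1 / (2 * η) * ‖xnext - xt‖ ^ 2
        ≤ ⟪g, y⟫_ℝ + 1 / (2 * η) * ‖y - xt‖ ^ 2) :
    ∀ xstar ∈ W, ⟪g, xt - xstar⟫_ℝ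
      ≤ 1 / (2 * η) * (‖xt - xstar‖ ^ 2 - ‖xnext - xstar‖ ^ 2) + η / 2 * ‖g‖ ^ 2 :=
  mirror_descent_key_inequality_general W hW η hη g xt xnext hmem hmin
end

section
/- Let f: W → ℝ be convex and differentiable on a convex set W ⊆ ℝ^d, let g_1, ..., g_T ∈ ℝ^d and define iterates x_1 ∈ W, x_{t+1} = Π_W(x_t - η g_t). Then for any x ∈ W: ∑_{t=1}^T ⟨g_t, x_t - x⟩ ≤ ‖x₁ - x‖²/(2η) + (η/2)∑_{t=1}^T ‖g_t‖². In particular, if g_t = ∇f_t(x_t) for convex functions f_t with ‖∇f_t(x_t)‖ ≤uret G and ‖x₁ - x‖ ≤ R, setting η = R/(G√T) gives regret ∑_t (f_t(x_t) - f_t(x)) ≤ RG√T. -/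
/-!
Projection onto a convex set moves a point closer to every point of the set, so
`‖x_{t+1} - x‖ ≤ ‖x_t - η g_t - x‖`. Expanding the square gives
`⟪g_t, x_t - x⟫ ≤ (‖x_t - x‖² - ‖x_{t+1} - x‖²) / (2η) + η ‖g_t‖² / 2`, and the first terms
telescope. For the regret, convexity bounds `f_t x_t - f_t x` by `⟪∇f_t x_t, x_t - x⟫`, and
`η = R / (G √T)` makes the two terms `R² / (2η)` and `η T G² / 2` equal.
-/

open Finset
open scoped InnerProductSpace

lemma ConvexOn.le_sub_of_hasFDerivAt {E : Type*} [NormedAddCommGroup E] [NormedSpace ℝ E]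
    {s : Set E} {f : E → ℝ} {f' : E →L[ℝ] ℝ} {a b : E} (hf : ConvexOn ℝ s f) (ha : a ∈ s)
    (hb : b ∈ s) (hf' : HasFDerivAt f f' a) :
    f' (b - a) ≤ f b - f a := by
  set ℓ : ℝ →ᵃ[ℝ] E := AffineMap.lineMap a b
  have hline : ConvexOn ℝ (ℓ ⁻¹' s) (f ∘ ℓ) := hf.comp_affineMap ℓ
  have hderiv : HasDerivAt (f ∘ ℓ) (f' (b - a)) 0 :=
    (by simpa [ℓ] using hf' : HasFDerivAt f f' (ℓ 0)).comp_hasDerivAt 0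
      AffineMap.hasDerivAt_lineMap
  simpa [slope, ℓ] using
    hline.le_slope_of_hasDerivAt (by simpa [ℓ] using ha) (by simpa [ℓ] using hb) one_pos hderiv

lemma sum_Icc_one_sub_succ {M : Type*} [AddCommGroup M] (a : ℕ → M) (n : ℕ) :
    ∑ t ∈ Icc 1 n, (a t - a (t + 1)) = a 1 - a (n + 1) := by
  induction n with
  | zero => simp
  | succ n ih => rw [sum_Icc_succ_top (by omega), ih]; abel

section InnerProductSpace

variable {F : Type*} [NormedAddCommGroup F] [InnerProductSpace ℝ F]

lemma ConvexOn.sub_le_inner_gradient [CompleteSpace F] {s : Set F} {f : F → ℝ} {a b : F}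
    (hf : ConvexOn ℝ s f) (ha : a ∈ s) (hb : b ∈ s) (hfa : DifferentiableAt ℝ f a) :
    f a - f b ≤ ⟪gradient f a, a - b⟫_ℝ := by
  have := hf.le_sub_of_hasFDerivAt ha hb hfa.hasFDerivAt
  rw [← neg_sub a b, map_neg, ← InnerProductSpace.toDual_symm_apply] at this
  simp only [gradient]
  linarith

lemma Convex.norm_sub_le_of_isMinOn {s : Set F} (hs : Convex ℝ s) {u v z : F} (hv : v ∈ s)
    (hmin : IsMinOn (fun y => ‖y - u‖) s v) (hz : z ∈ s) :
    ‖v - z‖ ≤ ‖u - z‖ := by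
  have hinf : ‖u - v‖ = ⨅ w : s, ‖u - w‖ := by
    simp only [norm_sub_rev u]
    exact (hmin.iInf_eq hv).symm
  have hobtuse : ⟪u - v, z - v⟫_ℝ ≤ 0 := (norm_eq_iInf_iff_real_inner_le_zero hs hv).1 hinf z hz
  have hexpand : ‖u - z‖ ^ 2 = ‖u - v‖ ^ 2 - 2 * ⟪u - v, z - v⟫_ℝ + ‖v - z‖ ^ 2 := by
    rw [← sub_add_sub_cancel u v z, norm_add_sq_real, ← neg_sub z v, inner_neg_right]
    ring
  refine (pow_le_pow_iff_left₀ (norm_nonneg _) (norm_nonneg _) two_ne_zero).1 ?_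
  nlinarith [sq_nonneg ‖u - v‖]

lemma inner_le_of_norm_sub_le {x g v z : F} {η : ℝ} (hη : 0 < η)
    (h : ‖v - z‖ ≤ ‖x - η • g - z‖) :
    ⟪g, x - z⟫_ℝ ≤ (‖x - z‖ ^ 2 - ‖v - z‖ ^ 2) / (2 * η) + η / 2 * ‖g‖ ^ 2 := by
  have hexpand : ‖x - η • g - z‖ ^ 2 = ‖x - z‖ ^ 2 - 2 * η * ⟪g, x - z⟫_ℝ + η ^ 2 * ‖g‖ ^ 2 := by
    rw [sub_right_comm, norm_sub_sq_real, real_inner_smul_right, norm_smul, real_inner_comm,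
      Real.norm_of_nonneg hη.le]
    ring
  have hsq : ‖v - z‖ ^ 2 ≤ ‖x - η • g - z‖ ^ 2 := by gcongr
  rw [div_add' _ _ _ (by positivity), le_div_iff₀ (by positivity)]
  nlinarith

theorem sum_inner_sub_le_of_isMinOn {s : Set F} (hs : Convex ℝ s) {x g : ℕ → F} {η : ℝ}
    (hη : 0 < η) (hmem : ∀ t, x (t + 1) ∈ s)
    (hmin : ∀ t, 1 ≤ t → IsMinOn (fun y => ‖y - (x t - η • g t)‖) s (x (t + 1)))
    {z : F} (hz : z ∈ s) (T : ℕ) :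
    ∑ t ∈ Icc 1 T, ⟪g t, x t - z⟫_ℝ ≤
      ‖x 1 - z‖ ^ 2 / (2 * η) + η / 2 * ∑ t ∈ Icc 1 T, ‖g t‖ ^ 2 := by
  set D : ℕ → ℝ := fun t => ‖x t - z‖ ^ 2
  calc ∑ t ∈ Icc 1 T, ⟪g t, x t - z⟫_ℝ
      ≤ ∑ t ∈ Icc 1 T, ((D t - D (t + 1)) / (2 * η) + η / 2 * ‖g t‖ ^ 2) := by
        refine sum_le_sum fun t ht => inner_le_of_norm_sub_le hη ?_
        exact hs.norm_sub_le_of_isMinOn (hmem t) (hmin t (mem_Icc.1 ht).1) hz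
    _ = (D 1 - D (T + 1)) / (2 * η) + η / 2 * ∑ t ∈ Icc 1 T, ‖g t‖ ^ 2 := by
        rw [sum_add_distrib, ← sum_div, ← mul_sum, sum_Icc_one_sub_succ]
    _ ≤ D 1 / (2 * η) + η / 2 * ∑ t ∈ Icc 1 T, ‖g t‖ ^ 2 := by
        gcongr
        exact sub_le_self _ (sq_nonneg _)

end InnerProductSpace

lemma sq_div_two_mul_add_mul_sq_eq {R S η : ℝ} (hη : η = R / S) (hη0 : η ≠ 0) :
    R ^ 2 / (2 * η) + η / 2 * S ^ 2 = R * S := by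
  -- `R / 0 = 0`, so `η ≠ 0` rules out `S = 0` (and `R = 0`).
  have hS : S ≠ 0 := by rintro rfl; simp_all
  have hR : R ≠ 0 := by rintro rfl; simp_all
  subst hη
  field_simp
  ring

theorem ogd_regret_general {d T : ℕ}
    (W : Set (EuclideanSpace ℝ (Fin d))) (hW : Convex ℝ W)
    (f : ℕ → EuclideanSpace ℝ (Fin d) → ℝ)
    (g x : ℕ → EuclideanSpace ℝ (Fin d))
    (η G R : ℝ) (hη : 0 < η)
    (hmemW : ∀ t, x (t + 1) ∈ W)
    (hproj : ∀ t, 1 ≤ t → ∀ y ∈ W,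
        ‖x (t + 1) - (x t - η • g t)‖ ≤ ‖y - (x t - η • g t)‖)
    (hconv : ∀ t, ConvexOn ℝ W (f t))
    (hdiff : ∀ t, ∀ w ∈ W, DifferentiableAt ℝ (f t) w)
    (hgrad : ∀ t, g t = gradient (f t) (x t))
    (hGbound : ∀ t, 1 ≤ t → t ≤ T → ‖g t‖ ≤ G)
    (xstar : EuclideanSpace ℝ (Fin d)) (hxs : xstar ∈ W)
    (hRbound : ‖x 1 - xstar‖ ≤ R) :
    (∑ t ∈ Finset.Icc 1 T, ⟪g t, x t - xstar⟫_ℝ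
        ≤ ‖x 1 - xstar‖ ^ 2 / (2 * η) + η / 2 * ∑ t ∈ Finset.Icc 1 T, ‖g t‖ ^ 2) ∧
    (η = R / (G * Real.sqrt T) →
      ∑ t ∈ Finset.Icc 1 T, (f t (x t) - f t xstar) ≤ R * G * Real.sqrt T) := by
  have hbound := sum_inner_sub_le_of_isMinOn hW hη hmemW
    (fun t ht => isMinOn_iff.2 (hproj t ht)) hxs T
  refine ⟨hbound, fun hηval => ?_⟩
  have hregret : ∑ t ∈ Icc 1 T, (f t (x t) - f t xstar) ≤ ∑ t ∈ Icc 1 T, ⟪g t, x t - xstar⟫_ℝ :=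
    sum_le_sum fun t ht => by
      have hxt : x t ∈ W := Nat.sub_add_cancel (mem_Icc.1 ht).1 ▸ hmemW (t - 1)
      rw [hgrad t]
      exact (hconv t).sub_le_inner_gradient hxt hxs (hdiff t _ hxt)
  have hgsum : ∑ t ∈ Icc 1 T, ‖g t‖ ^ 2 ≤ (G * Real.sqrt T) ^ 2 := by
    calc ∑ t ∈ Icc 1 T, ‖g t‖ ^ 2 ≤ #(Icc 1 T) • G ^ 2 :=
          sum_le_card_nsmul _ _ _ fun t ht =>
            pow_le_pow_left₀ (norm_nonneg _) (hGbound t (mem_Icc.1 ht).1 (mem_Icc.1 ht).2) 2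
      _ = (G * Real.sqrt T) ^ 2 := by
          rw [Nat.card_Icc, nsmul_eq_mul, mul_pow, Real.sq_sqrt (Nat.cast_nonneg T)]
          push_cast [Nat.add_sub_cancel]
          ring
  calc ∑ t ∈ Icc 1 T, (f t (x t) - f t xstar)
      ≤ ‖x 1 - xstar‖ ^ 2 / (2 * η) + η / 2 * ∑ t ∈ Icc 1 T, ‖g t‖ ^ 2 := hregret.trans hbound
    _ ≤ R ^ 2 / (2 * η) + η / 2 * (G * Real.sqrt T) ^ 2 := by gcongr
    _ = R * G * Real.sqrt T := by rw [sq_div_two_mul_add_mul_sq_eq hηval hη.ne', mul_assoc]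

/-- Regret bound of online (projected) gradient descent: the general inequality for any
step size, and the RG√T regret bound for the tuned step size η = R/(G√T). -/
theorem ogd_regret {d T : ℕ} (hT : 1 ≤ T)
    (W : Set (EuclideanSpace ℝ (Fin d))) (hW : Convex ℝ W) (hclosed : IsClosed W)
    (f : ℕ → EuclideanSpace ℝ (Fin d) → ℝ)
    (g x : ℕ → EuclideanSpace ℝ (Fin d))
    (η G R : ℝ) (hη : 0 < η) (hG : 0 < G) (hR : 0 < R)
    (hx1 : x 1 ∈ W)
    (hmemW : ∀ t, x (t + 1) ∈ W)
    (hproj : ∀ t, 1 ≤ t → ∀ y ∈ W,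
        ‖x (t + 1) - (x t - η • g t)‖ ≤ ‖y - (x t - η • g t)‖)
    (hconv : ∀ t, ConvexOn ℝ W (f t))
    (hdiff : ∀ t, ∀ w ∈ W, DifferentiableAt ℝ (f t) w)
    (hgrad : ∀ t, g t = gradient (f t) (x t))
    (hGbound : ∀ t, 1 ≤ t → t ≤ T → ‖g t‖ ≤ G)
    (xstar : EuclideanSpace ℝ (Fin d)) (hxs : xstar ∈ W)
    (hRbound : ‖x 1 - xstar‖ ≤ R) :
    (∑ t ∈ Finset.Icc 1 T, ⟪g t, x t - xstar⟫_ℝ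
        ≤ ‖x 1 - xstar‖ ^ 2 / (2 * η) + η / 2 * ∑ t ∈ Finset.Icc 1 T, ‖g t‖ ^ 2) ∧
    (η = R / (G * Real.sqrt T) →
      ∑ t ∈ Finset.Icc 1 T, (f t (x t) - f t xstar) ≤ R * G * Real.sqrt T) :=
  ogd_regret_general W hW f g x η G R hη hmemW hproj hconv hdiff hgrad hGbound xstar hxs hRbound
end

section
/- (Extragradient/Prox lemma) Let Φ be α-strongly convex w.r.t. a norm ‖·‖ with dual norm ‖·‖_*, B the induced Bregman divergence, U a closed convex set, z ∈ U, γ > 0, and define x = argmin_{u ∈ U} γ⟨u, ξ⟩ + B(u, z) and z₊ = argmin_{u ∈ U} γ⟨u, ζ⟩ + B(u, z). Then for any u ∈ U: γ⟨ζ, x - u⟩ ≤ B(u, z) - B(u, z₊) + (γ²/α)‖ξ - ζ‖_*² - (α/2)[‖x - z‖² + ‖x - z₊‖²]. -/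
/-!
Both prox points satisfy the first-order optimality condition of their Bregman-regularized
problem, which by the three-point identity reads
`γ⟪g, p - u⟫ ≤ B(u, z) - B(u, p) - B(p, z)` for all `u ∈ U`. Applying it to `z₊` (at `u`) and to
`x` (at `z₊`), adding, and bounding `B(z₊, x)`, `B(x, z)` from below by strong convexity leaves the
cross term `γ⟪ξ - ζ, z₊ - x⟫`. Testing the two optimality conditions against each other shows
`α‖x - z₊‖² ≤ γ⟪ξ - ζ, z₊ - x⟫ ≤ γ‖ξ - ζ‖_* ‖x - z₊‖`, and Young's inequality turns this into
`γ⟪ξ - ζ, z₊ - x⟫ ≤ (γ²/α)‖ξ - ζ‖_*²`.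
-/

open scoped InnerProductSpace

theorem le_sq_div_of_mul_sq_le_of_le_mul {α s c b : ℝ} (hα : 0 < α) (h₁ : α * b ^ 2 ≤ s)
    (h₂ : s ≤ c * b) : s ≤ c ^ 2 / α := by
  rw [le_div_iff₀ hα]
  nlinarith [sq_nonneg (c - α * b), mul_le_mul_of_nonneg_left h₂ hα.le]

section Bregman

variable {E : Type*} [NormedAddCommGroup E] [InnerProductSpace ℝ E] [CompleteSpace E]

noncomputable def bregman (Φ : E → ℝ) (x z : E) : ℝ :=
  Φ x - Φ z - ⟪gradient Φ z, x - z⟫_ℝ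

theorem bregman_three_point (Φ : E → ℝ) (u x z : E) :
    bregman Φ u z - bregman Φ u x - bregman Φ x z = ⟪gradient Φ x - gradient Φ z, u - x⟫_ℝ := by
  simp only [bregman, inner_sub_left, inner_sub_right]
  ring

theorem hasGradientAt_bregman {Φ : E → ℝ} {p : E} (hΦ : DifferentiableAt ℝ Φ p) (z : E) :
    HasGradientAt (fun u => bregman Φ u z) (gradient Φ p - gradient Φ z) p := by
  have hfun : (fun u => bregman Φ u z)
      = fun u => Φ u - Φ z - (innerSL ℝ (gradient Φ z) u - ⟪gradient Φ z, z⟫_ℝ) := by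
    ext u
    simp [bregman, inner_sub_right]
  have hdual : InnerProductSpace.toDual ℝ E (gradient Φ z) = innerSL ℝ (gradient Φ z) := by
    ext v
    simp
  rw [hasGradientAt_iff_hasFDerivAt, map_sub, hfun, hdual]
  exact (hΦ.hasGradientAt.hasFDerivAt.sub_const (Φ z)).sub
    ((innerSL ℝ (gradient Φ z)).hasFDerivAt.sub_const _)

theorem Convex.prox_three_point {U : Set E} (hU : Convex ℝ U) {Φ : E → ℝ} {γ : ℝ} {g z p u : E}
    (hp : p ∈ U) (hΦ : DifferentiableAt ℝ Φ p)
    (hmin : IsMinOn (fun w => γ * ⟪w, g⟫_ℝ + bregman Φ w z) U p) (hu : u ∈ U) :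
    γ * ⟪g, p - u⟫_ℝ ≤ bregman Φ u z - bregman Φ u p - bregman Φ p z := by
  have hlin : HasFDerivAt (fun w => γ * ⟪w, g⟫_ℝ) (γ • innerSL ℝ g) p := by
    refine ((innerSL ℝ g).hasFDerivAt.const_smul γ).congr_of_eventuallyEq
      (Filter.Eventually.of_forall fun w => ?_)
    simp [real_inner_comm]
  have hopt := hmin.localize.hasFDerivWithinAt_nonneg
    (hlin.add (hasGradientAt_bregman hΦ z).hasFDerivAt).hasFDerivWithinAt
    (sub_mem_posTangentConeAt_of_segment_subset (hU.segment_subset hp hu))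
  simp only [add_apply, smul_apply, innerSL_apply_apply, InnerProductSpace.toDual_apply_apply,
    smul_eq_mul] at hopt
  rw [bregman_three_point, ← neg_sub u p, inner_neg_right]
  linarith

theorem Convex.bregman_add_bregman_le_of_prox {U : Set E} (hU : Convex ℝ U) {Φ : E → ℝ}
    {γ : ℝ} {ξ ζ z x zp : E} (hx : x ∈ U) (hzp : zp ∈ U) (hΦx : DifferentiableAt ℝ Φ x)
    (hΦzp : DifferentiableAt ℝ Φ zp)
    (hxmin : IsMinOn (fun u => γ * ⟪u, ξ⟫_ℝ + bregman Φ u z) U x)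
    (hzpmin : IsMinOn (fun u => γ * ⟪u, ζ⟫_ℝ + bregman Φ u z) U zp) :
    bregman Φ zp x + bregman Φ x zp ≤ γ * ⟪ξ - ζ, zp - x⟫_ℝ := by
  have hx_zp := hU.prox_three_point hx hΦx hxmin hzp
  have hzp_x := hU.prox_three_point hzp hΦzp hzpmin hx
  have hsum : γ * ⟪ξ, x - zp⟫_ℝ + γ * ⟪ζ, zp - x⟫_ℝ = -(γ * ⟪ξ - ζ, zp - x⟫_ℝ) := by
    simp only [inner_sub_left, inner_sub_right]
    ring
  linarith

theorem Convex.extragradient_bregman {U : Set E} (hU : Convex ℝ U) {Φ : E → ℝ}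
    {γ : ℝ} {ξ ζ z x zp u : E} (hx : x ∈ U) (hzp : zp ∈ U) (hΦx : DifferentiableAt ℝ Φ x)
    (hΦzp : DifferentiableAt ℝ Φ zp)
    (hxmin : IsMinOn (fun w => γ * ⟪w, ξ⟫_ℝ + bregman Φ w z) U x)
    (hzpmin : IsMinOn (fun w => γ * ⟪w, ζ⟫_ℝ + bregman Φ w z) U zp) (hu : u ∈ U) :
    γ * ⟪ζ, x - u⟫_ℝ ≤ bregman Φ u z - bregman Φ u zp - bregman Φ zp x - bregman Φ x z
      + γ * ⟪ξ - ζ, zp - x⟫_ℝ := by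
  have hzp_u := hU.prox_three_point hzp hΦzp hzpmin hu
  have hx_zp := hU.prox_three_point hx hΦx hxmin hzp
  have hsplit : γ * ⟪ζ, x - u⟫_ℝ
      = γ * ⟪ζ, zp - u⟫_ℝ + γ * ⟪ξ, x - zp⟫_ℝ + γ * ⟪ξ - ζ, zp - x⟫_ℝ := by
    simp only [inner_sub_left, inner_sub_right]
    ring
  linarith

end Bregman

section SeminormFiniteDimensional

variable {E : Type*} [NormedAddCommGroup E] [NormedSpace ℝ E] [FiniteDimensional ℝ E]

theorem Seminorm.continuous_of_finiteDimensional (p : Seminorm ℝ E) : Continuous p :=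
  continuousOn_univ.mp (p.convexOn.continuousOn isOpen_univ)

theorem Seminorm.exists_pos_mul_norm_le (p : Seminorm ℝ E) (hp : ∀ x, p x = 0 → x = 0) :
    ∃ c > 0, ∀ x, c * ‖x‖ ≤ p x := by
  obtain ⟨c, hc, hcp⟩ := (isCompact_sphere (0 : E) 1).exists_forall_le'
    p.continuous_of_finiteDimensional.continuousOn (a := 0) fun x hx =>
      (apply_nonneg p x).lt_of_ne fun h => ne_zero_of_mem_unit_sphere ⟨x, hx⟩ (hp x h.symm)
  refine ⟨c, hc, fun x => ?_⟩
  rcases eq_or_ne x 0 with rfl | hx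
  · simp
  · have hx' : 0 < ‖x‖ := norm_pos_iff.mpr hx
    have h := hcp (‖x‖⁻¹ • x) (by simp [norm_smul, hx'.ne'])
    rw [map_smul_eq_mul, norm_inv, norm_norm] at h
    exact (le_inv_mul_iff₀' hx').mp h

end SeminormFiniteDimensional

section DualNorm

variable {E : Type*} [NormedAddCommGroup E] [InnerProductSpace ℝ E] [FiniteDimensional ℝ E]

theorem Seminorm.inner_le_sSup_mul (p : Seminorm ℝ E)
    (hp : ∀ x, p x = 0 → x = 0) (y v : E) :
    ⟪y, v⟫_ℝ ≤ sSup ((fun x => ⟪y, x⟫_ℝ) '' {x | p x ≤ 1}) * p v := by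
  obtain ⟨c, hc, hcp⟩ := p.exists_pos_mul_norm_le hp
  have hbdd : BddAbove ((fun x => ⟪y, x⟫_ℝ) '' {x | p x ≤ 1}) := by
    refine ⟨‖y‖ * c⁻¹, ?_⟩
    rintro _ ⟨x, hx, rfl⟩
    have hx' : ‖x‖ ≤ c⁻¹ := by simpa using (le_inv_mul_iff₀ hc).mpr ((hcp x).trans hx)
    exact (real_inner_le_norm y x).trans (mul_le_mul_of_nonneg_left hx' (norm_nonneg y))
  rcases (apply_nonneg p v).eq_or_lt with hv | hv
  · simp [hp v hv.symm]
  · have hmem : ⟪y, (p v)⁻¹ • v⟫_ℝ ∈ (fun x => ⟪y, x⟫_ℝ) '' {x | p x ≤ 1} :=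
      ⟨_, by simp [map_smul_eq_mul, abs_of_pos hv, hv.ne'], rfl⟩
    rw [real_inner_smul_right] at hmem
    rw [mul_comm]
    exact (inv_mul_le_iff₀ hv).mp (le_csSup hbdd hmem)

end DualNorm

theorem extragradient_lemma_general {d : ℕ}
    (K U : Set (EuclideanSpace ℝ (Fin d)))
    (hUK : U ⊆ K) (hUconv : Convex ℝ U)
    (N Nstar : EuclideanSpace ℝ (Fin d) → ℝ) (α : ℝ) (hα : 0 < α)
    (hNzero : ∀ x, N x = 0 ↔ x = 0)
    (hNtri : ∀ x y, N (x + y) ≤ N x + N y)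
    (hNsmul : ∀ (c : ℝ) (x : EuclideanSpace ℝ (Fin d)), N (c • x) = |c| * N x)
    (hNstar : ∀ y, Nstar y = sSup ((fun x => ⟪y, x⟫_ℝ) '' {x | N x ≤ 1}))
    (Φ : EuclideanSpace ℝ (Fin d) → ℝ)
    (hΦdiff : ∀ x ∈ K, DifferentiableAt ℝ Φ x)
    (hΦsc : ∀ x ∈ K, ∀ y ∈ K,
      Φ x ≥ Φ y + ⟪gradient Φ y, x - y⟫_ℝ + α / 2 * N (x - y) ^ 2)
    (B : EuclideanSpace ℝ (Fin d) → EuclideanSpace ℝ (Fin d) → ℝ)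
    (hB : ∀ x z, B x z = Φ x - Φ z - ⟪gradient Φ z, x - z⟫_ℝ)
    (γ : ℝ) (hγ : 0 < γ)
    (ξ ζ z x zp : EuclideanSpace ℝ (Fin d))
    (hz : z ∈ U) (hx : x ∈ U) (hzp : zp ∈ U)
    (hxmin : ∀ u ∈ U, γ * ⟪x, ξ⟫_ℝ + B x z ≤ γ * ⟪u, ξ⟫_ℝ + B u z)
    (hzpmin : ∀ u ∈ U, γ * ⟪zp, ζ⟫_ℝ + B zp z ≤ γ * ⟪u, ζ⟫_ℝ + B u z) :
    ∀ u ∈ U, γ * ⟪ζ, x - u⟫_ℝ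
      ≤ B u z - B u zp + γ ^ 2 / α * Nstar (ξ - ζ) ^ 2
        - α / 2 * (N (x - z) ^ 2 + N (x - zp) ^ 2) := by
  obtain rfl : B = bregman Φ := funext₂ hB
  let p : Seminorm ℝ (EuclideanSpace ℝ (Fin d)) := .of N hNtri (by simpa using hNsmul)
  have hsc : ∀ v ∈ U, ∀ w ∈ U, α / 2 * N (v - w) ^ 2 ≤ bregman Φ v w := fun v hv w hw => by
    have := hΦsc v (hUK hv) w (hUK hw)
    rw [bregman]
    linarith
  have hΦx := hΦdiff x (hUK hx)
  have hΦzp := hΦdiff zp (hUK hzp)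
  replace hxmin : IsMinOn (fun u => γ * ⟪u, ξ⟫_ℝ + bregman Φ u z) U x := isMinOn_iff.mpr hxmin
  replace hzpmin : IsMinOn (fun u => γ * ⟪u, ζ⟫_ℝ + bregman Φ u z) U zp :=
    isMinOn_iff.mpr hzpmin
  have hNsymm : N (zp - x) = N (x - zp) := map_sub_rev p zp x
  have hB_zp_x : α / 2 * N (x - zp) ^ 2 ≤ bregman Φ zp x := hNsymm ▸ hsc zp hzp x hx
  have hstab : α * N (x - zp) ^ 2 ≤ γ * ⟪ξ - ζ, zp - x⟫_ℝ := by
    have := hUconv.bregman_add_bregman_le_of_prox hx hzp hΦx hΦzp hxmin hzpmin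
    linarith [hsc x hx zp hzp]
  have hdual : γ * ⟪ξ - ζ, zp - x⟫_ℝ ≤ γ * Nstar (ξ - ζ) * N (x - zp) := by
    rw [hNstar, ← hNsymm, mul_assoc]
    exact mul_le_mul_of_nonneg_left (p.inner_le_sSup_mul (fun v => (hNzero v).mp) _ _) hγ.le
  have hcross : γ * ⟪ξ - ζ, zp - x⟫_ℝ ≤ γ ^ 2 / α * Nstar (ξ - ζ) ^ 2 := by
    simpa only [mul_pow, mul_div_right_comm] using
      le_sq_div_of_mul_sq_le_of_le_mul hα hstab hdual
  intro u hu
  have := hUconv.extragradient_bregman hx hzp hΦx hΦzp hxmin hzpmin hu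
  linarith [hsc x hx z hz]

/-- Extragradient (mirror prox) lemma: two prox steps from the same point with
gradients ξ and ζ, for a prox function Φ that is α-strongly convex with respect
to a general norm N with dual norm Nstar. -/
theorem extragradient_lemma {d : ℕ}
    (K U : Set (EuclideanSpace ℝ (Fin d)))
    (hKconv : Convex ℝ K) (hKcomp : IsCompact K)
    (hUK : U ⊆ K) (hUconv : Convex ℝ U) (hUclosed : IsClosed U)
    (N Nstar : EuclideanSpace ℝ (Fin d) → ℝ) (α : ℝ) (hα : 0 < α)
    (hN0 : ∀ x, 0 ≤ N x) (hNzero : ∀ x, N x = 0 ↔ x = 0)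
    (hNtri : ∀ x y, N (x + y) ≤ N x + N y)
    (hNsmul : ∀ (c : ℝ) (x : EuclideanSpace ℝ (Fin d)), N (c • x) = |c| * N x)
    (hNstar : ∀ y, Nstar y = sSup ((fun x => ⟪y, x⟫_ℝ) '' {x | N x ≤ 1}))
    (Φ : EuclideanSpace ℝ (Fin d) → ℝ)
    (hΦdiff : ∀ x ∈ K, DifferentiableAt ℝ Φ x)
    (hΦsc : ∀ x ∈ K, ∀ y ∈ K,
      Φ x ≥ Φ y + ⟪gradient Φ y, x - y⟫_ℝ + α / 2 * N (x - y) ^ 2)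
    (B : EuclideanSpace ℝ (Fin d) → EuclideanSpace ℝ (Fin d) → ℝ)
    (hB : ∀ x z, B x z = Φ x - Φ z - ⟪gradient Φ z, x - z⟫_ℝ)
    (γ : ℝ) (hγ : 0 < γ)
    (ξ ζ z x zp : EuclideanSpace ℝ (Fin d))
    (hz : z ∈ U) (hx : x ∈ U) (hzp : zp ∈ U)
    (hxmin : ∀ u ∈ U, γ * ⟪x, ξ⟫_ℝ + B x z ≤ γ * ⟪u, ξ⟫_ℝ + B u z)
    (hzpmin : ∀ u ∈ U, γ * ⟪zp, ζ⟫_ℝ + B zp z ≤ γ * ⟪u, ζ⟫_ℝ + B u z) :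
    ∀ u ∈ U, γ * ⟪ζ, x - u⟫_ℝ
      ≤ B u z - B u zp + γ ^ 2 / α * Nstar (ξ - ζ) ^ 2
        - α / 2 * (N (x - z) ^ 2 + N (x - zp) ^ 2) :=
  extragradient_lemma_general K U hUK hUconv N Nstar α hα hNzero hNtri hNsmul hNstar Φ hΦdiff hΦsc B
    hB γ hγ ξ ζ z x zp hz hx hzp hxmin hzpmin
end
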